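/- arXiv:2307.03071 — 2 statements merged into one kernel-verified Lean document; each statement's English description precedes it below -/
import Mathlib

section
/- If a classical solution J of a source instance I w.r.t. a data exchange setting S exists, then there exists a supported solution of I w.r.t. S obtained from a subset-minimal sub-solution of J by replacing each labeled null with a fresh constant not occurring in the dependencies or in the instance. -/
namespace DE

abbrev Var := ℕ

inductive Term (C : Type) where
  | const : C → Term C
  | null : ℕ → Term C

structure Atom (R C : Type) where
  rel : R
  args : List (Var ⊕ C)

structure Fact (R C : Type) where
  rel : R
  args : List (Term C)

abbrev Instance (R C : Type) := Set (Fact R C)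

def termOf {C : Type} (h : Var → Term C) : Var ⊕ C → Term C
  | Sum.inl v => h v
  | Sum.inr c => Term.const c

def applyAtom {R C : Type} (h : Var → Term C) (a : Atom R C) : Fact R C :=
  ⟨a.rel, a.args.map (termOf h)⟩

/-- `h` maps every atom of `as` into the instance `I`. -/
def holdsBody {R C : Type} (I : Instance R C) (h : Var → Term C)
    (as : List (Atom R C)) : Prop :=
  ∀ a ∈ as, applyAtom h a ∈ I

/-- A tuple-generating dependency. -/
structure TGD (R C : Type) where
  body : List (Atom R C)
  head : List (Atom R C)
  frontier : List Var
  exvars : List Var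

def varsOf {R C : Type} (as : List (Atom R C)) : Set Var :=
  {v | ∃ a ∈ as, (Sum.inl v : Var ⊕ C) ∈ a.args}

/-- Well-formedness of a TGD: frontier variables occur in the body, existential
variables do not, and every head variable is a frontier or existential variable. -/
def TGD.wf {R C : Type} (ρ : TGD R C) : Prop :=
  (∀ v ∈ ρ.frontier, v ∈ varsOf ρ.body) ∧
  (∀ z ∈ ρ.exvars, z ∉ varsOf ρ.body) ∧
  (∀ v ∈ varsOf ρ.head, v ∈ ρ.frontier ∨ v ∈ ρ.exvars)

/-- Satisfaction of a TGD by an instance. -/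
def satTGD {R C : Type} (I : Instance R C) (ρ : TGD R C) : Prop :=
  ∀ h : Var → Term C, holdsBody I h ρ.body →
    ∃ h' : Var → Term C, (∀ v ∈ varsOf ρ.body, h' v = h v) ∧ holdsBody I h' ρ.head

/-- An equality-generating dependency. -/
structure EGD (R C : Type) where
  body : List (Atom R C)
  lhs : Var
  rhs : Var

def satEGD {R C : Type} (I : Instance R C) (η : EGD R C) : Prop :=
  ∀ h : Var → Term C, holdsBody I h η.body → h η.lhs = h η.rhs

/-- An ex-choice: given a TGD and a tuple of constants for its frontier,
a constant for each existential variable. -/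
abbrev ExChoice (R C : Type) := TGD R C → List C → Var → C

def constHom {C : Type} (h : Var → C) : Var → Term C := fun v => Term.const (h v)

/-- `I` satisfies all ground versions of the TGD `ρ` that are coherent with `γ`. -/
def satTGDcoh {R C : Type} (I : Instance R C) (γ : ExChoice R C) (ρ : TGD R C) : Prop :=
  ∀ h : Var → C, (∀ z ∈ ρ.exvars, h z = γ ρ (ρ.frontier.map h) z) →
    holdsBody I (constHom h) ρ.body → holdsBody I (constHom h) ρ.head

/-- A data exchange setting: source-to-target TGDs, target TGDs, target EGDs. -/
structure Setting (R C : Type) where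
  sigmaST : List (TGD R C)
  sigmaT : List (TGD R C)
  sigmaE : List (EGD R C)

def Setting.wf {R C : Type} (S : Setting R C) : Prop :=
  ∀ ρ ∈ S.sigmaST ++ S.sigmaT, ρ.wf

/-- Classical solution: `I ∪ J` satisfies `Σst` and `J` satisfies `Σt`. -/
def classicalSolution {R C : Type} (S : Setting R C) (I J : Instance R C) : Prop :=
  J.Finite ∧ (∀ ρ ∈ S.sigmaST, satTGD (I ∪ J) ρ) ∧
    (∀ ρ ∈ S.sigmaT, satTGD J ρ) ∧ (∀ η ∈ S.sigmaE, satEGD J η)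

def supportedWith {R C : Type} (S : Setting R C) (γ : ExChoice R C)
    (I J : Instance R C) : Prop :=
  (∀ ρ ∈ S.sigmaST, satTGDcoh (I ∪ J) γ ρ) ∧
    (∀ ρ ∈ S.sigmaT, satTGDcoh J γ ρ) ∧ (∀ η ∈ S.sigmaE, satEGD J η)

/-- Supported solution: for some ex-choice `γ`, `I ∪ J` satisfies `Σst^γ`,
`J` satisfies `Σt^γ`, and no proper subset of `J` does. -/
def supportedSolution {R C : Type} (S : Setting R C) (I J : Instance R C) : Prop :=
  J.Finite ∧ ∃ γ : ExChoice R C, supportedWith S γ I J ∧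
    ∀ J' : Instance R C, J' ⊂ J → ¬ supportedWith S γ I J'

/-- An instance without labeled nulls (a database). -/
def nullFree {R C : Type} (I : Instance R C) : Prop :=
  ∀ f ∈ I, ∀ t ∈ f.args, ∃ c : C, t = Term.const c

end DE

namespace DE

def constsOfAtoms {R C : Type} (as : List (Atom R C)) : Set C :=
  {c | ∃ a ∈ as, (Sum.inr c : Var ⊕ C) ∈ a.args}

def constsOfTGD {R C : Type} (ρ : TGD R C) : Set C :=
  constsOfAtoms ρ.body ∪ constsOfAtoms ρ.head

def constsOfEGD {R C : Type} (η : EGD R C) : Set C := constsOfAtoms η.body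

def constsOfSetting {R C : Type} (S : Setting R C) : Set C :=
  {c | ∃ ρ ∈ S.sigmaST ++ S.sigmaT, c ∈ constsOfTGD ρ} ∪
    {c | ∃ η ∈ S.sigmaE, c ∈ constsOfEGD η}

def constsOfInstance {R C : Type} (I : Instance R C) : Set C :=
  {c | ∃ f ∈ I, Term.const c ∈ f.args}

/-- Replace each labeled null by a constant according to `r`. -/
def renameTerm {C : Type} (r : ℕ → C) : Term C → Term C
  | Term.null n => Term.const (r n)
  | Term.const c => Term.const c

def renameFact {R C : Type} (r : ℕ → C) (f : Fact R C) : Fact R C :=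
  ⟨f.rel, f.args.map (renameTerm r)⟩

/-- Active domain of an instance. -/
def adom {R C : Type} (J : Instance R C) : Set (Term C) := {t | ∃ f ∈ J, t ∈ f.args}

def mapFact {R C : Type} (h : Term C → Term C) (f : Fact R C) : Fact R C :=
  ⟨f.rel, f.args.map h⟩

end DE

/-!
Take a subset-minimal classical solution `J' ⊆ J` and fresh constants `r 0, r 1, …`.
Swapping each null `n` with the constant `r n` is an involution of terms that fixes the
constants of the dependencies and of `I`, so it maps (minimal) classical solutions to
(minimal) classical solutions; on `J'` it acts as the renaming, hence the renamed instance
`K` is a minimal classical solution without nulls. For a null-free `K`, satisfying the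
ground versions coherent with an ex-choice is the same as satisfying the TGDs, once the
ex-choice picks the existential witnesses from `K` itself. So `K` is a minimal model of
`Σ^γ` for that `γ`, i.e. a supported solution.
-/

lemma Set.Finite.exists_subset_minimal {α : Type*} {P : Set α → Prop} {s : Set α}
    (hs : s.Finite) (hP : P s) : ∃ t ⊆ s, Minimal P t := by
  have hfin : {u | u ⊆ s ∧ P u}.Finite := hs.finite_subsets.subset fun _ hu => hu.1
  obtain ⟨t, hts, ht⟩ := hfin.isPWO.exists_le_minimal ⟨subset_rfl, hP⟩
  exact ⟨t, hts, ht.prop.2, fun u hu hut => ht.2 ⟨hut.trans hts, hu⟩ hut⟩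

lemma Set.Finite.exists_injective_nat_notMem {α : Type*} [Infinite α] {s : Set α}
    (hs : s.Finite) : ∃ r : ℕ → α, Function.Injective r ∧ ∀ n, r n ∉ s :=
  ⟨fun n => hs.infinite_compl.natEmbedding _ n,
    fun _ _ h => (hs.infinite_compl.natEmbedding _).injective (Subtype.ext h),
    fun n => (hs.infinite_compl.natEmbedding _ n).2⟩

namespace DE

variable {R C : Type}

section Homomorphisms

variable {M N : Instance R C} {as : List (Atom R C)} {h h₁ h₂ : Var → Term C}

lemma holdsBody_mono (hMN : M ⊆ N) (hM : holdsBody M h as) : holdsBody N h as :=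
  fun a ha => hMN (hM a ha)

lemma holdsBody_congr (hag : ∀ v ∈ varsOf as, h₁ v = h₂ v) :
    holdsBody M h₁ as ↔ holdsBody M h₂ as := by
  have happly : ∀ a ∈ as, applyAtom h₁ a = applyAtom h₂ a := by
    intro a ha
    simp only [applyAtom, Fact.mk.injEq, true_and]
    refine List.map_congr_left fun x hx => ?_
    cases x with
    | inl v => exact hag v ⟨a, ha, hx⟩
    | inr c => rfl
  exact forall₂_congr fun a ha => by rw [happly a ha]

lemma exists_const_of_holdsBody (hM : nullFree M) (hb : holdsBody M h as) {v : Var}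
    (hv : v ∈ varsOf as) : ∃ c, h v = Term.const c := by
  obtain ⟨a, ha, hva⟩ := hv
  exact hM _ (hb a ha) _ (List.mem_map_of_mem (f := termOf h) hva)

end Homomorphisms

section Transfer

variable {σ : Term C → Term C}

lemma mapFact_applyAtom (h : Var → Term C) {a : Atom R C}
    (hc : ∀ c, (Sum.inr c : Var ⊕ C) ∈ a.args → σ (Term.const c) = Term.const c) :
    mapFact σ (applyAtom h a) = applyAtom (σ ∘ h) a := by
  simp only [mapFact, applyAtom, List.map_map, Fact.mk.injEq, true_and]
  refine List.map_congr_left fun x hx => ?_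
  cases x with
  | inl v => rfl
  | inr c => exact hc c hx

lemma mapFact_involutive (hσ : Function.Involutive σ) :
    Function.Involutive (mapFact σ : Fact R C → Fact R C) := fun f => by
  simp only [mapFact, List.map_map, hσ.comp_self, List.map_id]

lemma image_mapFact_eq_self {M : Instance R C} (hM : ∀ t ∈ adom M, σ t = t) :
    mapFact σ '' M = M := by
  refine (Set.image_congr fun f hf => ?_).trans (Set.image_id M)
  change Fact.mk f.rel (f.args.map σ) = f
  rw [List.map_congr_left (g := id) fun t ht => hM t ⟨f, hf, ht⟩, List.map_id]

variable {M : Instance R C} {h : Var → Term C} {as : List (Atom R C)}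

lemma holdsBody_image (hc : ∀ c ∈ constsOfAtoms as, σ (Term.const c) = Term.const c)
    (hM : holdsBody M h as) : holdsBody (mapFact σ '' M) (σ ∘ h) as := fun a ha =>
  mapFact_applyAtom h (fun c hca => hc c ⟨a, ha, hca⟩) ▸ Set.mem_image_of_mem _ (hM a ha)

lemma holdsBody_of_image (hσ : Function.Involutive σ)
    (hc : ∀ c ∈ constsOfAtoms as, σ (Term.const c) = Term.const c)
    (hM : holdsBody (mapFact σ '' M) h as) : holdsBody M (σ ∘ h) as := by
  simpa only [(mapFact_involutive hσ).leftInverse.image_image] using holdsBody_image hc hM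

lemma satTGD_image (hσ : Function.Involutive σ) {ρ : TGD R C}
    (hc : ∀ c ∈ constsOfTGD ρ, σ (Term.const c) = Term.const c) (hM : satTGD M ρ) :
    satTGD (mapFact σ '' M) ρ := by
  intro h hbody
  obtain ⟨h', hagree, hhead⟩ :=
    hM (σ ∘ h) (holdsBody_of_image hσ (fun c hc' => hc c (.inl hc')) hbody)
  refine ⟨σ ∘ h', fun v hv => ?_, holdsBody_image (fun c hc' => hc c (.inr hc')) hhead⟩
  simp only [Function.comp_apply, hagree v hv, hσ (h v)]

lemma satEGD_image (hσ : Function.Involutive σ) {η : EGD R C}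
    (hc : ∀ c ∈ constsOfEGD η, σ (Term.const c) = Term.const c) (hM : satEGD M η) :
    satEGD (mapFact σ '' M) η :=
  fun h hbody => hσ.injective (hM (σ ∘ h) (holdsBody_of_image hσ hc hbody))

variable {S : Setting R C} {I : Instance R C}

lemma classicalSolution_image (hσ : Function.Involutive σ)
    (hS : ∀ c ∈ constsOfSetting S, σ (Term.const c) = Term.const c) (hI : mapFact σ '' I = I)
    (hM : classicalSolution S I M) : classicalSolution S I (mapFact σ '' M) := by
  obtain ⟨hfin, hst, ht, he⟩ := hM
  have hTGD : ∀ ρ ∈ S.sigmaST ++ S.sigmaT, ∀ c ∈ constsOfTGD ρ,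
      σ (Term.const c) = Term.const c := fun ρ hρ c hc => hS c (.inl ⟨ρ, hρ, hc⟩)
  refine ⟨hfin.image _, fun ρ hρ => ?_, fun ρ hρ => ?_, fun η hη => ?_⟩
  · rw [← hI, ← Set.image_union]
    exact satTGD_image hσ (hTGD ρ (List.mem_append_left _ hρ)) (hst ρ hρ)
  · exact satTGD_image hσ (hTGD ρ (List.mem_append_right _ hρ)) (ht ρ hρ)
  · exact satEGD_image hσ (fun c hc => hS c (.inr ⟨η, hη, hc⟩)) (he η hη)

lemma minimal_classicalSolution_image (hσ : Function.Involutive σ)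
    (hS : ∀ c ∈ constsOfSetting S, σ (Term.const c) = Term.const c) (hI : mapFact σ '' I = I)
    (hM : Minimal (classicalSolution S I) M) :
    Minimal (classicalSolution S I) (mapFact σ '' M) := by
  have hinv : ∀ s : Instance R C, mapFact σ '' (mapFact σ '' s) = s :=
    (mapFact_involutive hσ).leftInverse.image_image
  refine ⟨classicalSolution_image hσ hS hI hM.prop, fun K hK hKM => ?_⟩
  have hKM' : mapFact σ '' K = M := hM.eq_of_subset (classicalSolution_image hσ hS hI hK)
    (by simpa only [hinv] using Set.image_mono (f := mapFact σ) hKM)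
  rw [← hKM', hinv]

end Transfer

section Renaming

variable (r : ℕ → C)

open Classical in
noncomputable def swapNulls : Term C → Term C
  | Term.null n => Term.const (r n)
  | Term.const c => if h : ∃ n, r n = c then Term.null h.choose else Term.const c

variable {r}

lemma swapNulls_const_of_notMem_range {c : C} (hc : c ∉ Set.range r) :
    swapNulls r (Term.const c) = Term.const c :=
  dif_neg hc

lemma swapNulls_involutive (hr : Function.Injective r) : Function.Involutive (swapNulls r) := by
  intro t
  cases t with
  | null n =>
    have hn : ∃ m, r m = r n := ⟨n, rfl⟩
    simp only [swapNulls, dif_pos hn, hr hn.choose_spec]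
  | const c =>
    by_cases hc : ∃ n, r n = c
    · simp only [swapNulls, dif_pos hc, hc.choose_spec]
    · rw [swapNulls_const_of_notMem_range hc, swapNulls_const_of_notMem_range hc]

lemma renameFact_image_eq_swapNulls {M : Instance R C}
    (hM : ∀ c ∈ constsOfInstance M, c ∉ Set.range r) :
    renameFact r '' M = mapFact (swapNulls r) '' M := by
  refine Set.image_congr fun f hf => ?_
  simp only [renameFact, mapFact, Fact.mk.injEq, true_and]
  refine List.map_congr_left fun t ht => ?_
  cases t with
  | null n => rfl
  | const c => exact (swapNulls_const_of_notMem_range (hM c ⟨f, hf, ht⟩)).symm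

variable (r)

lemma nullFree_image_renameFact (M : Instance R C) : nullFree (renameFact r '' M) := by
  rintro _ ⟨f, -, rfl⟩ _ ht
  obtain ⟨t, -, rfl⟩ := List.mem_map.mp ht
  cases t with
  | null n => exact ⟨r n, rfl⟩
  | const c => exact ⟨c, rfl⟩

end Renaming

section Finiteness

lemma finite_constsOfAtoms (as : List (Atom R C)) : (constsOfAtoms as).Finite := by
  have : constsOfAtoms as = Sum.inr ⁻¹' {x | x ∈ as.flatMap Atom.args} := by
    ext c
    simp [constsOfAtoms]
  exact this ▸ (List.finite_toSet _).preimage Sum.inr_injective.injOn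

lemma finite_constsOfSetting (S : Setting R C) : (constsOfSetting S).Finite := by
  refine .union ?_ ?_
  · refine ((List.finite_toSet (S.sigmaST ++ S.sigmaT)).biUnion fun ρ _ =>
      (finite_constsOfAtoms ρ.body).union (finite_constsOfAtoms ρ.head)).subset ?_
    exact fun c ⟨ρ, hρ, hc⟩ => Set.mem_biUnion hρ hc
  · refine ((List.finite_toSet S.sigmaE).biUnion fun η _ =>
      finite_constsOfAtoms η.body).subset ?_
    exact fun c ⟨η, hη, hc⟩ => Set.mem_biUnion hη hc

lemma finite_constsOfInstance {M : Instance R C} (hM : M.Finite) :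
    (constsOfInstance M).Finite := by
  refine (hM.biUnion fun f _ =>
    (List.finite_toSet f.args).preimage fun _ _ _ _ => Term.const.inj).subset ?_
  exact fun c ⟨f, hf, hc⟩ => Set.mem_biUnion hf hc

end Finiteness

section Supported

def IsGroundWitness (M : Instance R C) (ρ : TGD R C) (cs : List C) (g : Var → C) : Prop :=
  ρ.frontier.map g = cs ∧ holdsBody M (constHom g) ρ.head

variable {K N M : Instance R C} {ρ : TGD R C} {cs : List C} {g : Var → C}

lemma exists_isGroundWitness (hM : nullFree M) (hwf : ρ.wf) (hsat : satTGD M ρ)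
    {h : Var → C} (hb : holdsBody M (constHom h) ρ.body) :
    ∃ g, IsGroundWitness M ρ (ρ.frontier.map h) g := by
  obtain ⟨h', hagree, hhead⟩ := hsat _ hb
  let g : Var → C := fun v => match h' v with
    | Term.const c => c
    | Term.null _ => h v
  refine ⟨g, List.map_congr_left fun v hv => ?_, (holdsBody_congr fun v hv => ?_).2 hhead⟩
  · simp only [g, hagree v (hwf.1 v hv), constHom]
  · obtain ⟨c, hc⟩ := exists_const_of_holdsBody hM hhead hv
    simp only [constHom, g, hc]

lemma satTGDcoh_of_isGroundWitness {γ : ExChoice R C} (hwf : ρ.wf)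
    (hγ : ∀ h : Var → C, holdsBody M (constHom h) ρ.body →
      IsGroundWitness M ρ (ρ.frontier.map h) (γ ρ (ρ.frontier.map h))) :
    satTGDcoh M γ ρ := by
  intro h hcoh hb
  obtain ⟨hfr, hhead⟩ := hγ h hb
  refine (holdsBody_congr fun v hv => ?_).1 hhead
  rcases hwf.2.2 v hv with hv | hv
  · simp only [constHom, List.map_eq_map_iff.mp hfr v hv]
  · simp only [constHom, hcoh v hv]

/-- A TGD may belong to both `Σt` and `Σst`, so the ex-choice must serve `K` and `N = I ∪ K`
at once: witnesses in `K` are preferred, and they are witnesses in `N` as well. -/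
noncomputable def witnessChoice [Nonempty C] (K N : Instance R C) : ExChoice R C :=
  open Classical in fun ρ cs =>
  if hK : ∃ g, IsGroundWitness K ρ cs g then hK.choose
  else if hN : ∃ g, IsGroundWitness N ρ cs g then hN.choose
  else fun _ => Classical.arbitrary C

variable [Nonempty C]

lemma isGroundWitness_witnessChoice_left (hg : IsGroundWitness K ρ cs g) :
    IsGroundWitness K ρ cs (witnessChoice K N ρ cs) := by
  have hK : ∃ g, IsGroundWitness K ρ cs g := ⟨g, hg⟩
  simpa only [witnessChoice, dif_pos hK] using hK.choose_spec

lemma isGroundWitness_witnessChoice_right (hKN : K ⊆ N) (hg : IsGroundWitness N ρ cs g) :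
    IsGroundWitness N ρ cs (witnessChoice K N ρ cs) := by
  by_cases hK : ∃ g, IsGroundWitness K ρ cs g
  · obtain ⟨hfr, hhead⟩ := isGroundWitness_witnessChoice_left (N := N) hK.choose_spec
    exact ⟨hfr, holdsBody_mono hKN hhead⟩
  · have hN : ∃ g, IsGroundWitness N ρ cs g := ⟨g, hg⟩
    simpa only [witnessChoice, dif_neg hK, dif_pos hN] using hN.choose_spec

lemma satTGDcoh_witnessChoice_left (hK : nullFree K) (hwf : ρ.wf) (hsat : satTGD K ρ) :
    satTGDcoh K (witnessChoice K N) ρ :=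
  satTGDcoh_of_isGroundWitness hwf fun _ hb =>
    isGroundWitness_witnessChoice_left (exists_isGroundWitness hK hwf hsat hb).choose_spec

lemma satTGDcoh_witnessChoice_right (hKN : K ⊆ N) (hN : nullFree N) (hwf : ρ.wf)
    (hsat : satTGD N ρ) : satTGDcoh N (witnessChoice K N) ρ :=
  satTGDcoh_of_isGroundWitness hwf fun _ hb =>
    isGroundWitness_witnessChoice_right hKN (exists_isGroundWitness hN hwf hsat hb).choose_spec

lemma satTGD_of_satTGDcoh {γ : ExChoice R C} (hM : nullFree M) (hwf : ρ.wf)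
    (hcoh : satTGDcoh M γ ρ) : satTGD M ρ := by
  classical
  intro h hb
  let hc : Var → C := fun v => match h v with
    | Term.const c => c
    | Term.null _ => Classical.arbitrary C
  let g : Var → C := fun v => if v ∈ ρ.exvars then γ ρ (ρ.frontier.map hc) v else hc v
  have hnex : ∀ v ∈ varsOf ρ.body, v ∉ ρ.exvars := fun v hv hz => hwf.2.1 v hz hv
  have hgh : ∀ v ∈ varsOf ρ.body, constHom g v = h v := by
    intro v hv
    obtain ⟨c, hcv⟩ := exists_const_of_holdsBody hM hb hv
    simp only [constHom, g, hc, if_neg (hnex v hv), hcv]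
  have hfr : ρ.frontier.map g = ρ.frontier.map hc :=
    List.map_congr_left fun v hv => if_neg (hnex v (hwf.1 v hv))
  refine ⟨constHom g, hgh, hcoh g (fun z hz => ?_) ((holdsBody_congr hgh).2 hb)⟩
  rw [hfr]
  exact if_pos hz

variable {S : Setting R C} {I : Instance R C}

lemma classicalSolution_of_supportedWith {γ : ExChoice R C} (hS : S.wf) (hI : nullFree I)
    (hM : nullFree M) (hfin : M.Finite) (hsup : supportedWith S γ I M) :
    classicalSolution S I M := by
  obtain ⟨hst, ht, he⟩ := hsup
  have hIM : nullFree (I ∪ M) := by rintro f (hf | hf) <;> [exact hI f hf; exact hM f hf]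
  exact ⟨hfin,
    fun ρ hρ => satTGD_of_satTGDcoh hIM (hS ρ (List.mem_append_left _ hρ)) (hst ρ hρ),
    fun ρ hρ => satTGD_of_satTGDcoh hM (hS ρ (List.mem_append_right _ hρ)) (ht ρ hρ), he⟩

lemma supportedWith_witnessChoice (hS : S.wf) (hI : nullFree I) (hM : nullFree M)
    (hsol : classicalSolution S I M) : supportedWith S (witnessChoice M (I ∪ M)) I M := by
  obtain ⟨-, hst, ht, he⟩ := hsol
  have hIM : nullFree (I ∪ M) := by rintro f (hf | hf) <;> [exact hI f hf; exact hM f hf]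
  exact ⟨fun ρ hρ => satTGDcoh_witnessChoice_right Set.subset_union_right hIM
      (hS ρ (List.mem_append_left _ hρ)) (hst ρ hρ),
    fun ρ hρ => satTGDcoh_witnessChoice_left hM (hS ρ (List.mem_append_right _ hρ)) (ht ρ hρ),
    he⟩

lemma supportedSolution_of_minimal (hS : S.wf) (hI : nullFree I) (hM : nullFree M)
    (hmin : Minimal (classicalSolution S I) M) : supportedSolution S I M := by
  refine ⟨hmin.prop.1, witnessChoice M (I ∪ M), supportedWith_witnessChoice hS hI hM hmin.prop,
    fun M' hM'M hsup => hM'M.ne (hmin.eq_of_subset ?_ hM'M.subset)⟩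
  exact classicalSolution_of_supportedWith hS hI (fun f hf => hM f (hM'M.subset hf))
    (hmin.prop.1.subset hM'M.subset) hsup

end Supported

end DE

/-- from a classical solution one obtains a supported solution by
taking a subset-minimal sub-solution and renaming each labeled null to a fresh
constant not occurring in the dependencies or in the instance. -/
theorem supported_from_classical_by_renaming {R C : Type} [Infinite C]
    (S : DE.Setting R C) (hS : S.wf)
    (I : DE.Instance R C) (hInf : DE.nullFree I) (hIfin : I.Finite)
    (J : DE.Instance R C) (hJ : DE.classicalSolution S I J) :
    ∃ J' ⊆ J, DE.classicalSolution S I J' ∧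
      (∀ J'' ⊆ J', DE.classicalSolution S I J'' → J'' = J') ∧
      ∃ r : ℕ → C, Function.Injective r ∧
        (∀ n : ℕ, r n ∉ DE.constsOfSetting S ∪ DE.constsOfInstance (I ∪ J')) ∧
        DE.supportedSolution S I (DE.renameFact r '' J') := by
  obtain ⟨J', hJ'J, hmin⟩ := hJ.1.exists_subset_minimal hJ
  obtain ⟨r, hr, hrB⟩ := ((DE.finite_constsOfSetting S).union
    (DE.finite_constsOfInstance (hIfin.union hmin.prop.1))).exists_injective_nat_notMem
  have hfresh : ∀ c ∈ DE.constsOfSetting S ∪ DE.constsOfInstance (I ∪ J'),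
      c ∉ Set.range r := by
    rintro c hc ⟨n, rfl⟩
    exact hrB n hc
  have hI : DE.mapFact (DE.swapNulls r) '' I = I := by
    refine DE.image_mapFact_eq_self fun t ⟨f, hf, ht⟩ => ?_
    obtain ⟨c, rfl⟩ := hInf f hf t ht
    exact DE.swapNulls_const_of_notMem_range (hfresh c (.inr ⟨f, .inl hf, ht⟩))
  have hK : Minimal (DE.classicalSolution S I) (DE.renameFact r '' J') := by
    rw [DE.renameFact_image_eq_swapNulls fun c ⟨f, hf, hc⟩ =>
      hfresh c (.inr ⟨f, .inr hf, hc⟩)]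
    exact DE.minimal_classicalSolution_image (DE.swapNulls_involutive hr)
      (fun c hc => DE.swapNulls_const_of_notMem_range (hfresh c (.inl hc))) hI hmin
  exact ⟨J', hJ'J, hmin.prop, fun _ hsub hsol => hmin.eq_of_subset hsol hsub, r, hr, hrB,
    DE.supportedSolution_of_minimal hS hInf (DE.nullFree_image_renameFact r J') hK⟩
end

section
/- For the semigroup-embedding reduction setting, if J is a supported solution of I_{A,f} and the Boolean query Q (which is true iff the relation G of J fails to encode a total associative function extending nothing beyond functionality) is false on J, then the relation {(a,b,c) | G(a,b,c) ∈ J} is the graph of a total associative function g on a finite set B ⊇ A extending f; hence (A,f) is a yes-instance of the finite semigroup embedding problem. -/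
inductive SRel : Type
  | F | G | Aux

namespace Semigroup

def rhoST (C : Type) : DE.TGD SRel C :=
  ⟨[⟨SRel.F, [Sum.inl 0, Sum.inl 1, Sum.inl 2]⟩],
   [⟨SRel.G, [Sum.inl 0, Sum.inl 1, Sum.inl 2]⟩], [0, 1, 2], []⟩

def rhoT (C : Type) : DE.TGD SRel C :=
  ⟨[⟨SRel.G, [Sum.inl 0, Sum.inl 1, Sum.inl 2]⟩],
   [⟨SRel.G, [Sum.inl 3, Sum.inl 4, Sum.inl 5]⟩,
    ⟨SRel.Aux, [Sum.inl 0, Sum.inl 1, Sum.inl 2]⟩], [0, 1, 2], [3, 4, 5]⟩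

def setting (C : Type) : DE.Setting SRel C := ⟨[rhoST C], [rhoT C], []⟩

/-- The source instance encoding the partial function `f`. -/
def Iaf {C : Type} (f : C → C → Option C) : DE.Instance SRel C :=
  {fa | ∃ a b c, f a b = some c ∧
        fa = ⟨SRel.F, [DE.Term.const a, DE.Term.const b, DE.Term.const c]⟩}

end Semigroup

namespace Semigroup

/-- The elements mentioned in the `G` relation of `J`. -/
def gdom {C : Type} (J : DE.Instance SRel C) : Set (DE.Term C) :=
  {t | ∃ x y z : DE.Term C, (⟨SRel.G, [x, y, z]⟩ : DE.Fact SRel C) ∈ J ∧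
    (t = x ∨ t = y ∨ t = z)}

end Semigroup

/-!
Minimality of a supported solution forces `J` to be null-free: the null-free facts of `J`
already satisfy every ground dependency coherent with the ex-choice, because a ground image
of an atom contains no nulls. Hence on constants `G` is a functional, associative relation,
total on the finite set `D` of constants it mentions, and by `Σst` it contains the graph of
`f`. Its operation on `D` extends to `A ∪ D` by first retracting onto `D`.
-/

namespace DE

variable {R C : Type}

def groundFacts : Instance R C := {fa | ∀ t ∈ fa.args, ∃ c : C, t = Term.const c}

theorem applyAtom_constHom_mem_groundFacts (h : Var → C) (a : Atom R C) :
    applyAtom (constHom h) a ∈ groundFacts := by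
  intro t ht
  obtain ⟨x, -, rfl⟩ := List.mem_map.mp ht
  cases x with
  | inl v => exact ⟨h v, rfl⟩
  | inr c => exact ⟨c, rfl⟩

theorem holdsBody.mono {I I' : Instance R C} (hII' : I ⊆ I') {h : Var → Term C}
    {as : List (Atom R C)} (hI : holdsBody I h as) : holdsBody I' h as :=
  fun a ha => hII' (hI a ha)

theorem satTGDcoh.of_subset {I I' : Instance R C} {γ : ExChoice R C} {ρ : TGD R C}
    (hI : satTGDcoh I γ ρ) (hI'I : I' ⊆ I) (hground : I ∩ groundFacts ⊆ I') :
    satTGDcoh I' γ ρ := fun h hcoh hbody a ha =>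
  hground ⟨hI h hcoh (hbody.mono hI'I) a ha, applyAtom_constHom_mem_groundFacts h a⟩

theorem satEGD.mono {I I' : Instance R C} {η : EGD R C} (hI : satEGD I η) (hI'I : I' ⊆ I) :
    satEGD I' η := fun h hbody => hI h (hbody.mono hI'I)

theorem supportedWith.inter_groundFacts {S : Setting R C} {γ : ExChoice R C}
    {I J : Instance R C} (hJ : supportedWith S γ I J) :
    supportedWith S γ I (J ∩ groundFacts) := by
  obtain ⟨hST, hT, hE⟩ := hJ
  refine ⟨fun ρ hρ => (hST ρ hρ).of_subset ?_ ?_, fun ρ hρ => (hT ρ hρ).of_subset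
    Set.inter_subset_left subset_rfl, fun η hη => (hE η hη).mono Set.inter_subset_left⟩
  · exact Set.union_subset_union_right _ Set.inter_subset_left
  · rw [Set.union_inter_distrib_right]
    exact Set.union_subset_union_left _ Set.inter_subset_left

theorem supportedSolution.nullFree {S : Setting R C} {I J : Instance R C}
    (hJ : supportedSolution S I J) : nullFree J := by
  obtain ⟨-, γ, hsup, hmin⟩ := hJ
  by_contra hnull
  exact hmin _ (Set.inter_ssubset_left_iff.mpr hnull) hsup.inter_groundFacts

end DE

namespace Semigroup

section PartialOperation

variable {C : Type} {D : Set C}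

theorem exists_op_of_functional_rel (R : C → C → C → Prop)
    (hfun : ∀ a b c c', R a b c → R a b c' → c = c')
    (htot : ∀ a ∈ D, ∀ b ∈ D, ∃ c, R a b c)
    (hmem : ∀ a b c, R a b c → c ∈ D)
    (hassoc : ∀ a b c ab bc u w, R a b ab → R b c bc → R ab c u → R a bc w → u = w) :
    ∃ g : C → C → C, (∀ a ∈ D, ∀ b ∈ D, g a b ∈ D) ∧
      (∀ a ∈ D, ∀ b ∈ D, ∀ c ∈ D, g (g a b) c = g a (g b c)) ∧
      ∀ a ∈ D, ∀ b ∈ D, ∀ c, R a b c → g a b = c := by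
  classical
  have hex : ∀ a b, ∃ c, a ∈ D → b ∈ D → R a b c := fun a b =>
    if h : a ∈ D ∧ b ∈ D then (htot a h.1 b h.2).imp fun _ hc _ _ => hc
    else ⟨a, fun ha hb => (h ⟨ha, hb⟩).elim⟩
  choose g hg using hex
  have hgD : ∀ a ∈ D, ∀ b ∈ D, g a b ∈ D := fun a ha b hb => hmem _ _ _ (hg a b ha hb)
  refine ⟨g, hgD, fun a ha b hb c hc => ?_, fun a ha b hb c hc => hfun _ _ _ _ (hg a b ha hb) hc⟩
  exact hassoc a b c _ _ _ _ (hg a b ha hb) (hg b c hb hc)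
    (hg _ c (hgD a ha b hb) hc) (hg a _ ha (hgD b hb c hc))

theorem exists_assoc_extension (g : C → C → C) (hgD : ∀ a ∈ D, ∀ b ∈ D, g a b ∈ D)
    (hassoc : ∀ a ∈ D, ∀ b ∈ D, ∀ c ∈ D, g (g a b) c = g a (g b c))
    {B : Set C} (hDB : D ⊆ B) :
    ∃ g' : C → C → C, (∀ a ∈ B, ∀ b ∈ B, g' a b ∈ B) ∧
      (∀ a b c : C, a ∈ B → b ∈ B → c ∈ B → g' (g' a b) c = g' a (g' b c)) ∧
      ∀ a ∈ D, ∀ b ∈ D, g' a b = g a b := by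
  classical
  rcases D.eq_empty_or_nonempty with rfl | ⟨d₀, hd₀⟩
  · exact ⟨fun a _ => a, fun a ha _ _ => ha, fun _ _ _ _ _ _ => rfl, fun _ ha => ha.elim⟩
  set r : C → C := fun c => if c ∈ D then c else d₀
  have hrD (c : C) : r c ∈ D := by
    by_cases hc : c ∈ D <;> simp [r, hc, hd₀]
  have hr (c : C) (hc : c ∈ D) : r c = c := if_pos hc
  refine ⟨fun a b => g (r a) (r b), fun a _ b _ => hDB (hgD _ (hrD a) _ (hrD b)),
    fun a b c _ _ _ => ?_, fun a ha b hb => by simp only [hr a ha, hr b hb]⟩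
  simp only [hr _ (hgD _ (hrD _) _ (hrD _))]
  exact hassoc _ (hrD a) _ (hrD b) _ (hrD c)

end PartialOperation

variable {C : Type}

def constGraph (J : DE.Instance SRel C) (a b c : C) : Prop :=
  (⟨SRel.G, [DE.Term.const a, DE.Term.const b, DE.Term.const c]⟩ : DE.Fact SRel C) ∈ J

def constDom (J : DE.Instance SRel C) : Set C := {c | DE.Term.const c ∈ gdom J}

theorem mem_constDom_of_constGraph {J : DE.Instance SRel C} {a b c : C}
    (h : constGraph J a b c) : a ∈ constDom J ∧ b ∈ constDom J ∧ c ∈ constDom J :=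
  ⟨⟨_, _, _, h, Or.inl rfl⟩, ⟨_, _, _, h, Or.inr (Or.inl rfl)⟩, ⟨_, _, _, h, Or.inr (Or.inr rfl)⟩⟩

theorem constDom_finite {J : DE.Instance SRel C} (hJ : J.Finite) : (constDom J).Finite := by
  refine Set.Finite.preimage (fun _ _ _ _ h => DE.Term.const.inj h) ?_
  refine (hJ.biUnion fun fa _ => fa.args.finite_toSet).subset ?_
  rintro t ⟨x, y, z, hfa, ht⟩
  exact Set.mem_biUnion hfa (by rcases ht with rfl | rfl | rfl <;> simp)

theorem constGraph_total {J : DE.Instance SRel C} (hnull : DE.nullFree J)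
    (htot : ∀ x ∈ gdom J, ∀ y ∈ gdom J,
      ∃ z : DE.Term C, (⟨SRel.G, [x, y, z]⟩ : DE.Fact SRel C) ∈ J) :
    ∀ a ∈ constDom J, ∀ b ∈ constDom J, ∃ c, constGraph J a b c := by
  intro a ha b hb
  obtain ⟨z, hz⟩ := htot _ ha _ hb
  obtain ⟨c, rfl⟩ := hnull _ hz z (by simp)
  exact ⟨c, hz⟩

theorem constGraph_of_eq_some {f : C → C → Option C} {J : DE.Instance SRel C}
    {γ : DE.ExChoice SRel C}
    (hJ : DE.supportedWith (setting C) γ (Iaf f) J) {a b c : C} (hf : f a b = some c) :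
    constGraph J a b c := by
  have hhead := hJ.1 (rhoST C) (by simp [setting])
    (fun v => if v = 0 then a else if v = 1 then b else c) (by simp [rhoST])
    (by
      simp only [DE.holdsBody, rhoST, List.mem_singleton, forall_eq]
      exact Or.inl ⟨a, b, c, hf, by simp [DE.applyAtom, DE.termOf, DE.constHom]⟩)
    _ List.mem_cons_self
  simp only [DE.applyAtom, DE.termOf, DE.constHom, List.map] at hhead
  rcases hhead with ⟨_, _, _, _, hF⟩ | hG
  · simp at hF
  · simpa [constGraph] using hG

end Semigroup

open Semigroup in
theorem supported_solution_query_false_gives_embedding_general {C : Type}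
    (A : Finset C)
    (f : C → C → Option C)
    (J : DE.Instance SRel C)
    (hJ : DE.supportedSolution (setting C) (Iaf f) J)
    (hfun : ∀ x y z z' : DE.Term C,
      (⟨SRel.G, [x, y, z]⟩ : DE.Fact SRel C) ∈ J →
      (⟨SRel.G, [x, y, z']⟩ : DE.Fact SRel C) ∈ J → z = z')
    (htot : ∀ x ∈ gdom J, ∀ y ∈ gdom J,
      ∃ z : DE.Term C, (⟨SRel.G, [x, y, z]⟩ : DE.Fact SRel C) ∈ J)
    (hassocJ : ∀ a b c ab bc u w : DE.Term C,
      (⟨SRel.G, [a, b, ab]⟩ : DE.Fact SRel C) ∈ J →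
      (⟨SRel.G, [b, c, bc]⟩ : DE.Fact SRel C) ∈ J →
      (⟨SRel.G, [ab, c, u]⟩ : DE.Fact SRel C) ∈ J →
      (⟨SRel.G, [a, bc, w]⟩ : DE.Fact SRel C) ∈ J → u = w) :
    ∃ B : Set C, B.Finite ∧ ↑A ⊆ B ∧ ∃ g : C → C → C,
      (∀ a ∈ B, ∀ b ∈ B, g a b ∈ B) ∧
      (∀ a b c : C, a ∈ B → b ∈ B → c ∈ B → g (g a b) c = g a (g b c)) ∧
      (∀ a b c : C, f a b = some c → g a b = c) := by
  obtain ⟨g, hgD, hgassoc, hgG⟩ := exists_op_of_functional_rel (constGraph J)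
    (fun _ _ _ _ h h' => DE.Term.const.inj (hfun _ _ _ _ h h'))
    (constGraph_total hJ.nullFree htot)
    (fun _ _ _ h => (mem_constDom_of_constGraph h).2.2)
    (fun _ _ _ _ _ _ _ h₁ h₂ h₃ h₄ => DE.Term.const.inj (hassocJ _ _ _ _ _ _ _ h₁ h₂ h₃ h₄))
  obtain ⟨g', hg'B, hg'assoc, hg'g⟩ := exists_assoc_extension g hgD hgassoc
    (Set.subset_union_right : constDom J ⊆ ↑A ∪ constDom J)
  refine ⟨↑A ∪ constDom J, A.finite_toSet.union (constDom_finite hJ.1), Set.subset_union_left,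
    g', hg'B, hg'assoc, fun a b c hf => ?_⟩
  obtain ⟨γ, hsup, -⟩ := hJ.2
  have hG := constGraph_of_eq_some hsup hf
  obtain ⟨ha, hb, -⟩ := mem_constDom_of_constGraph hG
  rw [hg'g a ha b hb, hgG a ha b hb c hG]

open Semigroup in
/-- if `J` is a supported solution of `I_{A,f}` on which the query
`Q` is false (i.e. `G` is functional, total on its mentioned elements, and
associative), then `(A,f)` is a yes-instance of the finite semigroup embedding
problem. -/
theorem supported_solution_query_false_gives_embedding {C : Type}
    (A : Finset C)
    (f : C → C → Option C) (hf : ∀ a b c : C, f a b = some c → a ∈ A ∧ b ∈ A ∧ c ∈ A)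
    (J : DE.Instance SRel C)
    (hJ : DE.supportedSolution (setting C) (Iaf f) J)
    (hfun : ∀ x y z z' : DE.Term C,
      (⟨SRel.G, [x, y, z]⟩ : DE.Fact SRel C) ∈ J →
      (⟨SRel.G, [x, y, z']⟩ : DE.Fact SRel C) ∈ J → z = z')
    (htot : ∀ x ∈ gdom J, ∀ y ∈ gdom J,
      ∃ z : DE.Term C, (⟨SRel.G, [x, y, z]⟩ : DE.Fact SRel C) ∈ J)
    (hassocJ : ∀ a b c ab bc u w : DE.Term C,
      (⟨SRel.G, [a, b, ab]⟩ : DE.Fact SRel C) ∈ J →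
      (⟨SRel.G, [b, c, bc]⟩ : DE.Fact SRel C) ∈ J →
      (⟨SRel.G, [ab, c, u]⟩ : DE.Fact SRel C) ∈ J →
      (⟨SRel.G, [a, bc, w]⟩ : DE.Fact SRel C) ∈ J → u = w) :
    ∃ B : Set C, B.Finite ∧ ↑A ⊆ B ∧ ∃ g : C → C → C,
      (∀ a ∈ B, ∀ b ∈ B, g a b ∈ B) ∧
      (∀ a b c : C, a ∈ B → b ∈ B → c ∈ B → g (g a b) c = g a (g b c)) ∧
      (∀ a b c : C, f a b = some c → g a b = c) :=
  supported_solution_query_false_gives_embedding_general A f J hJ hfun htot hassocJ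
end
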